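/- arXiv:1011.1799 — 5 statements merged into one kernel-verified Lean document; each statement's English description precedes it below -/
import Mathlib

section
/- If \tilde{K} admits a positive invariant probability measure \tilde{\pi}, then the sequence (K_n) is c-stable with respect to μ_0 = \tilde{\pi} with c = max over x ∈ V and i of \tilde{\pi}(g^i x)/\tilde{\pi}(x); that is, for all n ≥ 0 and all x ∈ V, c^{-1} ≤ μ_n(x)/μ_0(x) ≤ c where μ_n = μ_0 K_{0,n}. -/
/-!
The invariance of `π` under `K̃ = K ∘ g⁻¹` says exactly that `π K = π ∘ g`. Since `K_{i+1}` is
`K` conjugated by `gⁱ`, induction gives `μ_n = π K_{0,n} = π ∘ gⁿ`, so `μ_n(x)/μ_0(x)` is one of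
the ratios defining `c`. For the lower bound, `g` has finite order, so `x = gᵐ(gⁿx)` for some
`m`, and `μ_0(x)/μ_n(x)` is again such a ratio.
-/

open BigOperators Finset

def Kseq {V : Type*} [Fintype V] (K : Matrix V V ℝ) (g : Equiv.Perm V) (i : ℕ) :
    Matrix V V ℝ :=
  Matrix.of fun x y => K ((g ^ (i - 1)) x) ((g ^ (i - 1)) y)

def Kcomp {V : Type*} [Fintype V] [DecidableEq V] (K : Matrix V V ℝ) (g : Equiv.Perm V) :
    ℕ → Matrix V V ℝ
  | 0 => 1
  | n + 1 => Kcomp K g n * Kseq K g (n + 1)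

def tilde {V : Type*} [Fintype V] (K : Matrix V V ℝ) (g : Equiv.Perm V) : Matrix V V ℝ :=
  Matrix.of fun x y => K x (g.symm y)

open Matrix

section StableMeasure

variable {V : Type*} [Fintype V] (K : Matrix V V ℝ) (g : Equiv.Perm V) (π : V → ℝ)

lemma vecMul_eq_comp_of_tilde_invariant (hinv : ∀ y, ∑ x, π x * tilde K g x y = π y) :
    vecMul π K = π ∘ g := by
  funext y
  simpa [tilde, vecMul, dotProduct] using hinv (g y)

lemma vecMul_comp_pow_Kseq (f : V → ℝ) (i : ℕ) :
    vecMul (f ∘ (g ^ i)) (Kseq K g (i + 1)) = vecMul f K ∘ (g ^ i) := by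
  funext x
  simp only [vecMul, dotProduct, Function.comp_apply, Kseq, of_apply, Nat.add_sub_cancel]
  exact Fintype.sum_equiv (g ^ i) _ (fun z => f z * K z ((g ^ i) x)) fun _ => rfl

lemma vecMul_Kcomp_of_tilde_invariant [DecidableEq V]
    (hinv : ∀ y, ∑ x, π x * tilde K g x y = π y) (n : ℕ) :
    vecMul π (Kcomp K g n) = π ∘ (g ^ n) := by
  induction n with
  | zero => simp [Kcomp]
  | succ n ih =>
    rw [Kcomp, ← vecMul_vecMul, ih, vecMul_comp_pow_Kseq,
      vecMul_eq_comp_of_tilde_invariant K g π hinv, pow_succ']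
    rfl

end StableMeasure

lemma Equiv.Perm.exists_pow_apply_eq {V : Type*} [Finite V] (g : Equiv.Perm V) (n : ℕ) (x : V) :
    ∃ m : ℕ, (g ^ m) ((g ^ n) x) = x := by
  obtain ⟨m, hm⟩ : (g ^ n)⁻¹ ∈ Submonoid.powers g :=
    mem_powers_iff_mem_zpowers.mpr (Subgroup.inv_mem _ (Subgroup.npow_mem_zpowers g n))
  refine ⟨m, ?_⟩
  rw [show g ^ m = (g ^ n)⁻¹ from hm]
  exact (g ^ n).symm_apply_apply x

lemma inv_le_ratio_pow_apply_of_ratio_le {V : Type*} [Finite V] (g : Equiv.Perm V)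
    {f : V → ℝ} (hf : ∀ x, 0 < f x) {c : ℝ} (hc : ∀ x (i : ℕ), f ((g ^ i) x) / f x ≤ c)
    (n : ℕ) (x : V) : c⁻¹ ≤ f ((g ^ n) x) / f x := by
  obtain ⟨m, hm⟩ := g.exists_pow_apply_eq n x
  have hback : (f ((g ^ n) x) / f x)⁻¹ ≤ c := by
    simpa [hm, inv_div] using hc ((g ^ n) x) m
  have hpos : 0 < f ((g ^ n) x) / f x := div_pos (hf _) (hf x)
  simpa using inv_anti₀ (inv_pos.mpr hpos) hback

theorem stmt3_general {V : Type*} [Fintype V] [DecidableEq V] (K : Matrix V V ℝ) (g : Equiv.Perm V)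
    (π : V → ℝ) (hπpos : ∀ x, 0 < π x)
    (hinv : ∀ y, ∑ x, π x * tilde K g x y = π y)
    (c : ℝ) (hc : IsGreatest {r : ℝ | ∃ (x : V) (i : ℕ), r = π ((g ^ i) x) / π x} c) :
    ∀ (n : ℕ) (x : V),
      c⁻¹ ≤ Matrix.vecMul π (Kcomp K g n) x / π x ∧
        Matrix.vecMul π (Kcomp K g n) x / π x ≤ c := by
  intro n x
  have hratio : ∀ y (i : ℕ), π ((g ^ i) y) / π y ≤ c := fun y i => hc.2 ⟨y, i, rfl⟩
  rw [vecMul_Kcomp_of_tilde_invariant K g π hinv n, Function.comp_apply]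
  exact ⟨inv_le_ratio_pow_apply_of_ratio_le g hπpos hratio n x, hratio x n⟩

/-- Corollary 3.7: if K̃ has a positive invariant probability measure π̃, then
(K_n) is c-stable w.r.t. μ₀ = π̃ with c = max_{x,i} π̃(gⁱx)/π̃(x). -/
theorem stmt3 {V : Type*} [Fintype V] [DecidableEq V] (K : Matrix V V ℝ) (g : Equiv.Perm V)
    (hK0 : ∀ x y, 0 ≤ K x y) (hK1 : ∀ x, ∑ y, K x y = 1)
    (π : V → ℝ) (hπpos : ∀ x, 0 < π x) (hπ1 : ∑ x, π x = 1)
    (hinv : ∀ y, ∑ x, π x * tilde K g x y = π y)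
    (c : ℝ) (hc : IsGreatest {r : ℝ | ∃ (x : V) (i : ℕ), r = π ((g ^ i) x) / π x} c) :
    ∀ (n : ℕ) (x : V),
      c⁻¹ ≤ Matrix.vecMul π (Kcomp K g n) x / π x ∧
        Matrix.vecMul π (Kcomp K g n) x / π x ≤ c :=
  stmt3_general K g π hπpos hinv c hc
end

section
/- If K is irreducible and min_{x∈V} K(x,x) > 0, then for any bijection g of V, the kernel \tilde{K}(x,y) = K(x,g^{-1}y) is irreducible and aperiodic, i.e., there exists n with \tilde{K}^n(x,y) > 0 for all x,y. -/
/-! Whether an entry of a product of nonnegative matrices is positive depends only on which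
entries of the factors are positive. A positive diagonal makes these patterns grow with the
exponent, so one power `K ^ N` is entrywise positive. If `K x w > 0`, then `K̃ ^ m` reaches
`g ^ m w` from `x`: one step of `K` to `w`, then `m - 1` steps along the positive diagonal while
`g` moves the target. For `m = orderOf g` this puts every positive entry of `K` into `K̃ ^ m`,
so `K̃ ^ (m * N) = (K̃ ^ m) ^ N` is as positive as `K ^ N`. -/

open BigOperators Finset

namespace Matrix

variable {l m n R : Type*} [Semiring R] [PartialOrder R] [IsStrictOrderedRing R]

theorem mul_apply_pos_iff [Fintype m] {A : Matrix l m R} {B : Matrix m n R}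
    (hA : ∀ i j, 0 ≤ A i j) (hB : ∀ i j, 0 ≤ B i j) (i : l) (j : n) :
    0 < (A * B) i j ↔ ∃ k, 0 < A i k ∧ 0 < B k j := by
  rw [mul_apply, Finset.sum_pos_iff_of_nonneg fun k _ => mul_nonneg (hA i k) (hB k j)]
  refine ⟨fun ⟨k, _, hk⟩ => ⟨k, (hA i k).lt_of_ne ?_, (hB k j).lt_of_ne ?_⟩,
    fun ⟨k, hik, hkj⟩ => ⟨k, Finset.mem_univ k, mul_pos hik hkj⟩⟩
  · rintro h; simp [← h] at hk
  · rintro h; simp [← h] at hk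

variable [Fintype n] [DecidableEq n]

theorem pow_apply_pos_of_pos_of_le {A : Matrix n n R} (hA : ∀ i j, 0 ≤ A i j)
    (hdiag : ∀ i, 0 < A i i) {i j : n} {k m : ℕ} (hkm : k ≤ m) (hk : 0 < (A ^ k) i j) :
    0 < (A ^ m) i j := by
  induction m, hkm using Nat.le_induction with
  | base => exact hk
  | succ m _ ih =>
    rw [pow_succ, mul_apply_pos_iff (pow_apply_nonneg hA m) hA]
    exact ⟨j, ih, hdiag j⟩

theorem exists_pow_apply_pos_of_diag_pos {A : Matrix n n R} (hA : ∀ i j, 0 ≤ A i j)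
    (hdiag : ∀ i, 0 < A i i) (hirr : ∀ i j, ∃ k, 0 < (A ^ k) i j) :
    ∃ N, ∀ i j, 0 < (A ^ N) i j := by
  choose k hk using hirr
  exact ⟨Finset.univ.sup fun p : n × n => k p.1 p.2, fun i j =>
    pow_apply_pos_of_pos_of_le hA hdiag
      (Finset.le_sup (f := fun p : n × n => k p.1 p.2) (Finset.mem_univ (i, j))) (hk i j)⟩

theorem pow_apply_pos_of_pos_imp_pos {A B : Matrix n n R} (hA : ∀ i j, 0 ≤ A i j)
    (hB : ∀ i j, 0 ≤ B i j) (hAB : ∀ i j, 0 < A i j → 0 < B i j) (m : ℕ) {i j : n}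
    (h : 0 < (A ^ m) i j) : 0 < (B ^ m) i j := by
  induction m generalizing j with
  | zero => simpa using h
  | succ m ih =>
    rw [pow_succ, mul_apply_pos_iff (pow_apply_nonneg hA m) hA] at h
    rw [pow_succ, mul_apply_pos_iff (pow_apply_nonneg hB m) hB]
    obtain ⟨k, hik, hkj⟩ := h
    exact ⟨k, ih hik, hAB k j hkj⟩

end Matrix

theorem tilde_nonneg {V : Type*} [Fintype V] {K : Matrix V V ℝ} (hK0 : ∀ x y, 0 ≤ K x y)
    (g : Equiv.Perm V) (x y : V) : 0 ≤ tilde K g x y :=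
  hK0 x (g.symm y)

section tilde

variable {V : Type*} [Fintype V] [DecidableEq V] {K : Matrix V V ℝ}

theorem tilde_pow_apply_pos (hK0 : ∀ x y, 0 ≤ K x y) (hdiag : ∀ x, 0 < K x x)
    (g : Equiv.Perm V) {x w : V} (hxw : 0 < K x w) (m : ℕ) :
    0 < (tilde K g ^ (m + 1)) x ((g ^ (m + 1)) w) := by
  induction m with
  | zero => simpa [tilde] using hxw
  | succ m ih =>
    rw [pow_succ, Matrix.mul_apply_pos_iff (Matrix.pow_apply_nonneg (tilde_nonneg hK0 g) _)
      (tilde_nonneg hK0 g)]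
    refine ⟨(g ^ (m + 1)) w, ih, ?_⟩
    simpa [tilde, pow_succ' g (m + 1)] using hdiag _

theorem tilde_pow_orderOf_apply_pos (hK0 : ∀ x y, 0 ≤ K x y) (hdiag : ∀ x, 0 < K x x)
    (g : Equiv.Perm V) {x y : V} (hxy : 0 < K x y) : 0 < (tilde K g ^ orderOf g) x y := by
  obtain ⟨m, hm⟩ := Nat.exists_eq_add_one.mpr (orderOf_pos g)
  simpa [← hm, pow_orderOf_eq_one] using tilde_pow_apply_pos hK0 hdiag g hxy m

end tilde

theorem stmt5_general {V : Type*} [Fintype V] [DecidableEq V]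
    (K : Matrix V V ℝ)
    (hK0 : ∀ x y, 0 ≤ K x y)
    (hirr : ∀ x y : V, ∃ n : ℕ, 0 < (K ^ n) x y)
    (hdiag : ∀ x, 0 < K x x)
    (g : Equiv.Perm V) :
    ∃ n : ℕ, ∀ x y : V, 0 < (tilde K g ^ n) x y := by
  obtain ⟨N, hN⟩ := Matrix.exists_pow_apply_pos_of_diag_pos hK0 hdiag hirr
  refine ⟨orderOf g * N, fun x y => ?_⟩
  rw [pow_mul]
  exact Matrix.pow_apply_pos_of_pos_imp_pos hK0
    (Matrix.pow_apply_nonneg (tilde_nonneg hK0 g) _)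
    (fun _ _ => tilde_pow_orderOf_apply_pos hK0 hdiag g) N (hN x y)

/-- Proposition 3.10: if K is irreducible with positive diagonal, then for any
bijection g the kernel K̃ is irreducible and aperiodic. -/
theorem stmt5 {V : Type*} [Fintype V] [DecidableEq V] [Nonempty V]
    (K : Matrix V V ℝ)
    (hK0 : ∀ x y, 0 ≤ K x y) (hK1 : ∀ x, ∑ y, K x y = 1)
    (hirr : ∀ x y : V, ∃ n : ℕ, 0 < (K ^ n) x y)
    (hdiag : ∀ x, 0 < K x x)
    (g : Equiv.Perm V) :
    ∃ n : ℕ, ∀ x y : V, 0 < (tilde K g ^ n) x y :=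
  stmt5_general K hK0 hirr hdiag g
end

section
/- If K is irreducible on a finite set V with |V| = N and min_x K(x,x) > 0, then K_{0,N}(x,y) > 0 for all x, y ∈ V, where K_{0,N} = K_1⋯K_N with K_i(x,y) = K(g^{i-1}x, g^{i-1}y) for any bijection g of V. -/
open BigOperators Finset

/-!
Let `S_n` be the set of states reachable from `x` under `K_{0,n}`. Each factor `K_i` is a
relabelling of `K` by a bijection, so it still has positive diagonal, hence `S_n ⊆ S_{n+1}`,
and it is still irreducible, hence some positive entry leaves `S_n` unless `S_n = V`. Thus
`S_n` grows by at least one element at each step until it fills `V`, which takes at most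
`N - 1` steps starting from `S_0 = {x}`.
-/

section RowSupport

variable {V : Type*} [Fintype V]

noncomputable def rowSupport (P : Matrix V V ℝ) (x : V) : Finset V := univ.filter (0 < P x ·)

@[simp]
lemma mem_rowSupport {P : Matrix V V ℝ} {x y : V} : y ∈ rowSupport P x ↔ 0 < P x y := by
  simp [rowSupport]

lemma mem_rowSupport_mul {P A : Matrix V V ℝ} (hP : ∀ x y, 0 ≤ P x y) (hA : ∀ x y, 0 ≤ A x y)
    {x u v : V} (hu : u ∈ rowSupport P x) (huv : 0 < A u v) : v ∈ rowSupport (P * A) x := by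
  rw [mem_rowSupport] at hu ⊢
  rw [Matrix.mul_apply]
  exact sum_pos' (fun w _ => mul_nonneg (hP x w) (hA w v)) ⟨u, mem_univ u, mul_pos hu huv⟩

lemma min_card_add_one_le_card_rowSupport_mul {P A : Matrix V V ℝ}
    (hP : ∀ x y, 0 ≤ P x y) (hA : ∀ x y, 0 ≤ A x y) (hdiag : ∀ x, 0 < A x x)
    (hleak : ∀ (S : Set V) x y, x ∈ S → y ∉ S → ∃ u ∈ S, ∃ v ∉ S, 0 < A u v)
    {x : V} (hne : (rowSupport P x).Nonempty) :
    min (#(rowSupport P x) + 1) (Fintype.card V) ≤ #(rowSupport (P * A) x) := by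
  have hsub : rowSupport P x ⊆ rowSupport (P * A) x :=
    fun u hu => mem_rowSupport_mul hP hA hu (hdiag u)
  by_cases huniv : rowSupport P x = univ
  · rw [huniv, univ_subset_iff] at hsub
    simp [hsub]
  obtain ⟨y, hy⟩ : ∃ y, y ∉ rowSupport P x := by
    simpa [eq_univ_iff_forall] using huniv
  obtain ⟨z, hz⟩ := hne
  obtain ⟨u, hu, v, hv, huv⟩ := hleak (rowSupport P x) z y hz hy
  have hssub : rowSupport P x ⊂ rowSupport (P * A) x :=
    Finset.ssubset_iff_subset_ne.mpr
      ⟨hsub, fun h => hv (h ▸ mem_rowSupport_mul hP hA (SetLike.mem_coe.mp hu) huv)⟩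
  exact min_le_of_left_le (card_lt_card hssub)

end RowSupport

section Irreducible

variable {V : Type*} [Fintype V] [DecidableEq V]

/-- A path of positive entries from inside `S` to outside `S` has an edge leaving `S`. -/
lemma exists_pos_apply_of_pow_apply_pos {K : Matrix V V ℝ} (hK0 : ∀ x y, 0 ≤ K x y)
    {S : Set V} {n : ℕ} {x y : V} (hn : 0 < (K ^ n) x y) (hx : x ∈ S) (hy : y ∉ S) :
    ∃ u ∈ S, ∃ v ∉ S, 0 < K u v := by
  induction n generalizing x with
  | zero =>
    rw [pow_zero, Matrix.one_apply] at hn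
    split_ifs at hn with hxy
    · exact absurd (hxy ▸ hx) hy
    · exact absurd hn (lt_irrefl 0)
  | succ n ih =>
    rw [pow_succ', Matrix.mul_apply,
      sum_pos_iff_of_nonneg fun z _ => mul_nonneg (hK0 x z) (Matrix.pow_apply_nonneg hK0 n z y)]
      at hn
    obtain ⟨z, -, hz⟩ := hn
    by_cases hzS : z ∈ S
    · exact ih (pos_of_mul_pos_right hz (hK0 x z)) hzS
    · exact ⟨x, hx, z, hzS, pos_of_mul_pos_left hz (Matrix.pow_apply_nonneg hK0 n z y)⟩

lemma Kseq_exists_pos_apply {K : Matrix V V ℝ} (hK0 : ∀ x y, 0 ≤ K x y)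
    (hirr : ∀ x y : V, ∃ n : ℕ, 0 < (K ^ n) x y) (g : Equiv.Perm V) (i : ℕ)
    (S : Set V) (x y : V) (hx : x ∈ S) (hy : y ∉ S) : ∃ u ∈ S, ∃ v ∉ S, 0 < Kseq K g i u v := by
  set σ := g ^ (i - 1)
  obtain ⟨n, hn⟩ := hirr (σ x) (σ y)
  obtain ⟨u, hu, v, hv, huv⟩ := exists_pos_apply_of_pow_apply_pos hK0 (S := σ.symm ⁻¹' S) hn
    (by simpa using hx) (by simpa using hy)
  exact ⟨σ.symm u, hu, σ.symm v, hv, by simpa [Kseq, σ] using huv⟩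

lemma Kcomp_apply_nonneg {K : Matrix V V ℝ} (hK0 : ∀ x y, 0 ≤ K x y) (g : Equiv.Perm V) :
    ∀ n x y, 0 ≤ Kcomp K g n x y
  | 0, x, y => Matrix.zero_le_one_elem x y
  | n + 1, x, y => by
    rw [Kcomp, Matrix.mul_apply]
    exact sum_nonneg fun z _ => mul_nonneg (Kcomp_apply_nonneg hK0 g n x z) (hK0 _ _)

lemma min_le_card_rowSupport_Kcomp {K : Matrix V V ℝ} (hK0 : ∀ x y, 0 ≤ K x y)
    (hirr : ∀ x y : V, ∃ n : ℕ, 0 < (K ^ n) x y) (hdiag : ∀ x, 0 < K x x)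
    (g : Equiv.Perm V) (x : V) (n : ℕ) :
    min (n + 1) (Fintype.card V) ≤ #(rowSupport (Kcomp K g n) x) := by
  induction n with
  | zero =>
    have hx : x ∈ rowSupport (Kcomp K g 0) x := by simp [Kcomp]
    exact (min_le_left _ _).trans (card_pos.mpr ⟨x, hx⟩)
  | succ n ih =>
    have hcard : 0 < Fintype.card V := Fintype.card_pos_iff.mpr ⟨x⟩
    have hne : (rowSupport (Kcomp K g n) x).Nonempty := card_pos.mp (by omega)
    have hstep := min_card_add_one_le_card_rowSupport_mul (A := Kseq K g (n + 1))
      (Kcomp_apply_nonneg hK0 g n)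
      (fun _ _ => hK0 _ _) (fun _ => hdiag _) (Kseq_exists_pos_apply hK0 hirr g (n + 1)) hne
    rw [Kcomp]
    omega

end Irreducible

theorem stmt6_general {V : Type*} [Fintype V] [DecidableEq V]
    (K : Matrix V V ℝ)
    (hK0 : ∀ x y, 0 ≤ K x y)
    (hirr : ∀ x y : V, ∃ n : ℕ, 0 < (K ^ n) x y)
    (hdiag : ∀ x, 0 < K x x)
    (g : Equiv.Perm V)
    (N : ℕ) (hN : N = Fintype.card V) :
    ∀ x y : V, 0 < Kcomp K g N x y := by
  intro x y
  have hfull : rowSupport (Kcomp K g N) x = univ := by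
    refine eq_univ_of_card _ (le_antisymm (card_le_univ _) ?_)
    simpa [hN] using min_le_card_rowSupport_Kcomp hK0 hirr hdiag g x N
  exact mem_rowSupport.mp (hfull ▸ mem_univ y)

/-- If K is irreducible with positive diagonal on a set with N elements, then
K_{0,N}(x,y) > 0 for all x, y, for any bijection g. -/
theorem stmt6 {V : Type*} [Fintype V] [DecidableEq V] [Nonempty V]
    (K : Matrix V V ℝ)
    (hK0 : ∀ x y, 0 ≤ K x y) (hK1 : ∀ x, ∑ y, K x y = 1)
    (hirr : ∀ x y : V, ∃ n : ℕ, 0 < (K ^ n) x y)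
    (hdiag : ∀ x, 0 < K x x)
    (g : Equiv.Perm V)
    (N : ℕ) (hN : N = Fintype.card V) :
    ∀ x y : V, 0 < Kcomp K g N x y :=
  stmt6_general K hK0 hirr hdiag g N hN
end

section
/- Suppose Q is a symmetric Markov kernel on V, K = Q + Δ_A satisfies K(x,y) ≥ (1−ε)Q(x,y) for all x,y, and \tilde{π} is an invariant probability measure for \tilde{K}(x,y) = K(x,g^{-1}y) with max_x \tilde{π}(x) ≤ c·min_x \tilde{π}(x). Then the Dirichlet forms satisfy E_{Q_g^* Q_g, u}(f,f) ≤ (c/(1−ε)²) · E_{\tilde{K}^* \tilde{K}, \tilde{π}}(f,f) for every function f : V → ℝ, where u is the uniform probability measure on V and Q_g(x,y) = Q(g^{-1}x, g^{-1}y). -/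
open BigOperators Finset Matrix

/-- Dirichlet form of a kernel P reversible w.r.t. ν:
E_{P,ν}(f,f) = (1/2) ∑_{x,y} |f(x)-f(y)|² P(x,y) ν(x). -/
noncomputable def dirichletForm {V : Type*} [Fintype V] (P : Matrix V V ℝ) (ν : V → ℝ) (f : V → ℝ) : ℝ :=
  (1 / 2) * ∑ x, ∑ y, (f x - f y) ^ 2 * P x y * ν x

/-!
Both Dirichlet forms weigh the pair `(x, y)` by a sum over an intermediate state `z`:
`(Q_gᵀ Q_g)(x,y) u(x) = ∑_z u Q(z,g⁻¹x) Q(z,g⁻¹y)` and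
`(K̃^* K̃)(x,y) π̃(x) = ∑_z π̃(z) K(z,g⁻¹x) K(z,g⁻¹y)`.
The sums are compared term by term: `u ≤ c π̃(z)` because `π̃` is a probability measure whose
maximum is at most `c` times its minimum, and `(1-ε)² Q Q ≤ K K` entrywise.
-/

section

variable {V : Type*} [Fintype V]

theorem dirichletForm_le_mul_of_le {P P' : Matrix V V ℝ} {ν ν' : V → ℝ} {C : ℝ}
    (h : ∀ x y, P x y * ν x ≤ C * (P' x y * ν' x)) (f : V → ℝ) :
    dirichletForm P ν f ≤ C * dirichletForm P' ν' f := by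
  unfold dirichletForm
  calc 1 / 2 * ∑ x, ∑ y, (f x - f y) ^ 2 * P x y * ν x
      ≤ 1 / 2 * ∑ x, ∑ y, C * ((f x - f y) ^ 2 * P' x y * ν' x) := by
        refine mul_le_mul_of_nonneg_left
          (sum_le_sum fun x _ => sum_le_sum fun y _ => ?_) (by norm_num)
        have := mul_le_mul_of_nonneg_left (h x y) (sq_nonneg (f x - f y))
        linarith
    _ = C * (1 / 2 * ∑ x, ∑ y, (f x - f y) ^ 2 * P' x y * ν' x) := by
        simp only [← Finset.mul_sum]
        ring

theorem transpose_mul_self_submatrix_apply {R : Type*} [NonUnitalNonAssocSemiring R]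
    (Q : Matrix V V R) (e : V ≃ V) (x y : V) :
    ((Q.submatrix e e)ᵀ * Q.submatrix e e) x y = ∑ z, Q z (e x) * Q z (e y) := by
  rw [transpose_submatrix, submatrix_mul_equiv, submatrix_apply, mul_apply]
  rfl

theorem adjoint_mul_apply_mul {𝕜 : Type*} [Field 𝕜] {M Mstar : Matrix V V 𝕜} {π : V → 𝕜}
    (hπ : ∀ x, π x ≠ 0) (hMstar : ∀ x y, Mstar x y = π y * M y x / π x) (x y : V) :
    (Mstar * M) x y * π x = ∑ z, π z * M z x * M z y := by
  rw [mul_apply, Finset.sum_mul]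
  refine Finset.sum_congr rfl fun z _ => ?_
  rw [hMstar]
  field_simp [hπ x]

theorem one_div_card_le_mul_of_le_mul {π : V → ℝ} {c : ℝ} (hπ1 : ∑ x, π x = 1)
    (hc : ∀ x y, π x ≤ c * π y) (z : V) :
    1 / (Fintype.card V : ℝ) ≤ c * π z := by
  have hcard : (0 : ℝ) < Fintype.card V := by
    exact_mod_cast Fintype.card_pos_iff.mpr ⟨z⟩
  rw [div_le_iff₀ hcard]
  calc (1 : ℝ) = ∑ x, π x := hπ1.symm
    _ ≤ ∑ _x : V, c * π z := Finset.sum_le_sum fun x _ => hc x z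
    _ = c * π z * Fintype.card V := by
      rw [Finset.sum_const, nsmul_eq_mul, Finset.card_univ, mul_comm]

end

theorem mul_mul_le_div_sq_mul_mul_mul {r w p c q₁ q₂ k₁ k₂ : ℝ} (hr : 0 < r) (hw : 0 ≤ w)
    (hwp : w ≤ c * p) (hq₁ : 0 ≤ q₁) (hq₂ : 0 ≤ q₂) (hk₁ : r * q₁ ≤ k₁) (hk₂ : r * q₂ ≤ k₂) :
    w * (q₁ * q₂) ≤ c / r ^ 2 * (p * (k₁ * k₂)) := by
  have hk : r ^ 2 * (q₁ * q₂) ≤ k₁ * k₂ := by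
    calc r ^ 2 * (q₁ * q₂) = (r * q₁) * (r * q₂) := by ring
      _ ≤ k₁ * k₂ := mul_le_mul hk₁ hk₂ (by positivity) ((by positivity : 0 ≤ r * q₁).trans hk₁)
  have : 0 ≤ c * p := hw.trans hwp
  calc w * (q₁ * q₂) ≤ c * p * (q₁ * q₂) := by gcongr
    _ = c * p / r ^ 2 * (r ^ 2 * (q₁ * q₂)) := by field_simp
    _ ≤ c * p / r ^ 2 * (k₁ * k₂) := by gcongr
    _ = c / r ^ 2 * (p * (k₁ * k₂)) := by ring

theorem stmt8_general {V : Type*} [Fintype V]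
    (Q K : Matrix V V ℝ) (g : Equiv.Perm V) (ε : ℝ) (hε : ε ∈ Set.Ioo (0:ℝ) 1)
    (hQ0 : ∀ x y, 0 ≤ Q x y)
    (hKQ : ∀ x y, (1 - ε) * Q x y ≤ K x y)
    (π : V → ℝ) (hπpos : ∀ x, 0 < π x) (hπ1 : ∑ x, π x = 1)
    (c : ℝ) (hc : ∀ x y : V, π x ≤ c * π y)
    (u : V → ℝ) (hu : ∀ x, u x = 1 / Fintype.card V)
    (Qg : Matrix V V ℝ) (hQg : ∀ x y, Qg x y = Q (g.symm x) (g.symm y))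
    (Kstar : Matrix V V ℝ) (hKstar : ∀ x y, Kstar x y = π y * tilde K g y x / π x) :
    ∀ f : V → ℝ,
      dirichletForm (Qg.transpose * Qg) u f ≤
        (c / (1 - ε) ^ 2) * dirichletForm (Kstar * tilde K g) π f := by
  obtain rfl : Qg = Q.submatrix g.symm g.symm := Matrix.ext hQg
  refine dirichletForm_le_mul_of_le fun x y => ?_
  rw [transpose_mul_self_submatrix_apply, hu,
    adjoint_mul_apply_mul (fun x => (hπpos x).ne') hKstar, Finset.sum_mul, Finset.mul_sum]
  refine Finset.sum_le_sum fun z _ => ?_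
  rw [mul_comm, mul_assoc (π z)]
  exact mul_mul_le_div_sq_mul_mul_mul (by linarith [hε.2]) (by positivity)
    (one_div_card_le_mul_of_le_mul hπ1 hc z) (hQ0 _ _) (hQ0 _ _) (hKQ _ _) (hKQ _ _)

/-- Lemma 4.1 (Dirichlet form comparison): with K ≥ (1-ε)Q entrywise,
u uniform, π̃ invariant for K̃ with max π̃ ≤ c min π̃,
E_{Q_g*Q_g,u}(f,f) ≤ (c/(1-ε)²) E_{K̃*K̃,π̃}(f,f). -/
theorem stmt8 {V : Type*} [Fintype V] [Nonempty V]
    (Q K : Matrix V V ℝ) (g : Equiv.Perm V) (ε : ℝ) (hε : ε ∈ Set.Ioo (0:ℝ) 1)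
    (hQ0 : ∀ x y, 0 ≤ Q x y) (hQ1 : ∀ x, ∑ y, Q x y = 1)
    (hQsymm : ∀ x y, Q x y = Q y x)
    (hK0 : ∀ x y, 0 ≤ K x y) (hK1 : ∀ x, ∑ y, K x y = 1)
    (hKQ : ∀ x y, (1 - ε) * Q x y ≤ K x y)
    (π : V → ℝ) (hπpos : ∀ x, 0 < π x) (hπ1 : ∑ x, π x = 1)
    (hinv : ∀ y, ∑ x, π x * tilde K g x y = π y)
    (c : ℝ) (hc : ∀ x y : V, π x ≤ c * π y)
    (u : V → ℝ) (hu : ∀ x, u x = 1 / Fintype.card V)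
    (Qg : Matrix V V ℝ) (hQg : ∀ x y, Qg x y = Q (g.symm x) (g.symm y))
    (Kstar : Matrix V V ℝ) (hKstar : ∀ x y, Kstar x y = π y * tilde K g y x / π x) :
    ∀ f : V → ℝ,
      dirichletForm (Qg.transpose * Qg) u f ≤
        (c / (1 - ε) ^ 2) * dirichletForm (Kstar * tilde K g) π f :=
  stmt8_general Q K g ε hε hQ0 hKQ π hπpos hπ1 c hc u hu Qg hQg Kstar hKstar
end

section
/- Assume \tilde{π} ≠ u (uniform) and \tilde{K} is irreducible. Let M = max_x \tilde{π}(x), m = min_x \tilde{π}(x), A*_+ = {x : ∑_y \tilde{K}(y,x) > 1}, A*_- = {x : ∑_y \tilde{K}(y,x) < 1}. Then there exist x_+ ∈ A*_+ and x_- ∈ A*_- with \tilde{π}(x_+) = M and \tilde{π}(x_-) = m. -/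
/-!
Let `M` be the maximum of `π`. At a maximiser `x` with column sum at most one, invariance gives
`M = ∑ z, π z * K z x ≤ M * ∑ z, K z x ≤ M`, so equality holds throughout and every `z` with
`K z x > 0` is again a maximiser. If no maximiser had column sum above one, the maximisers would
be closed under predecessors, hence by irreducibility they would be everything, and `π` would be
uniform. The minimum is treated in the same way, applied to `-π`.
-/

open Finset

namespace Matrix

variable {n R : Type*} [Fintype n] [CommRing R] [LinearOrder R] [IsStrictOrderedRing R]
  {A : Matrix n n R} {f : n → R}

theorem apply_eq_of_isMax_of_pos (hA : ∀ i j, 0 ≤ A i j) (hinv : ∀ j, ∑ i, f i * A i j = f j)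
    {j : n} (hmax : ∀ l, f l ≤ f j) (hcol : f j * ∑ l, A l j ≤ f j) {i : n} (hij : 0 < A i j) :
    f i = f j := by
  have hterm : ∀ l ∈ univ, 0 ≤ (f j - f l) * A l j := fun l _ =>
    mul_nonneg (sub_nonneg.2 (hmax l)) (hA l j)
  have hsum : ∑ l, (f j - f l) * A l j = f j * ∑ l, A l j - f j := by
    simp only [sub_mul, sum_sub_distrib, mul_sum, hinv]
  have hzero : ∑ l, (f j - f l) * A l j = 0 :=
    le_antisymm (hsum ▸ sub_nonpos.2 hcol) (sum_nonneg hterm)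
  have hi := mul_eq_zero.1 ((sum_eq_zero_iff_of_nonneg hterm).1 hzero i (mem_univ i))
  linarith [hi.resolve_right hij.ne']

variable [DecidableEq n]

theorem of_pow_apply_pos {P : n → Prop} (hA : ∀ i j, 0 ≤ A i j)
    (hP : ∀ i j, 0 < A i j → P j → P i) {k : ℕ} {i j : n} (hk : 0 < (A ^ k) i j) (hj : P j) :
    P i := by
  induction k generalizing i with
  | zero =>
    obtain rfl : i = j := by
      by_contra hij
      simp [one_apply_ne hij] at hk
    exact hj
  | succ k ih =>
    rw [pow_succ', mul_apply, sum_pos_iff_of_nonneg fun l _ =>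
      mul_nonneg (hA i l) (pow_apply_nonneg hA k l j)] at hk
    obtain ⟨l, -, hl⟩ := hk
    obtain ⟨hAil, hpow⟩ := (pos_and_pos_or_neg_and_neg_of_mul_pos hl).resolve_right
      fun h => (hA i l).not_gt h.1
    exact hP i l hAil (ih hpow)

theorem apply_eq_apply_of_isMax_backward_closed [Nonempty n] (hA : ∀ i j, 0 ≤ A i j)
    (hirr : ∀ i j, ∃ k : ℕ, 0 < (A ^ k) i j)
    (hclosed : ∀ i j, 0 < A i j → (∀ l, f l ≤ f j) → f i = f j) (i j : n) : f i = f j := by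
  obtain ⟨j₀, hj₀⟩ := Finite.exists_max f
  have hP : ∀ i j, 0 < A i j → f j = f j₀ → f i = f j₀ := fun i j hij hj =>
    (hclosed i j hij (hj ▸ hj₀)).trans hj
  have hall (i : n) : f i = f j₀ := by
    obtain ⟨k, hk⟩ := hirr i j₀
    exact of_pow_apply_pos hA hP hk rfl
  rw [hall i, hall j]

theorem exists_one_lt_sum_apply_of_isMax [Nonempty n] (hA : ∀ i j, 0 ≤ A i j)
    (hirr : ∀ i j, ∃ k : ℕ, 0 < (A ^ k) i j) (hinv : ∀ j, ∑ i, f i * A i j = f j)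
    (hf : ∀ i, 0 ≤ f i) (hnc : ∃ i j, f i ≠ f j) :
    ∃ j, 1 < ∑ i, A i j ∧ ∀ i, f i ≤ f j := by
  by_contra! hcon
  obtain ⟨a, b, hab⟩ := hnc
  refine hab (apply_eq_apply_of_isMax_backward_closed hA hirr (fun i j hij hmax => ?_) a b)
  have hcol : ∑ l, A l j ≤ 1 := le_of_not_gt fun h =>
    (hcon j h).elim fun l hl => (hmax l).not_gt hl
  exact apply_eq_of_isMax_of_pos hA hinv hmax (mul_le_of_le_one_right (hf j) hcol) hij

theorem exists_sum_apply_lt_one_of_isMin [Nonempty n] (hA : ∀ i j, 0 ≤ A i j)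
    (hirr : ∀ i j, ∃ k : ℕ, 0 < (A ^ k) i j) (hinv : ∀ j, ∑ i, f i * A i j = f j)
    (hf : ∀ i, 0 ≤ f i) (hnc : ∃ i j, f i ≠ f j) :
    ∃ j, ∑ i, A i j < 1 ∧ ∀ i, f j ≤ f i := by
  by_contra! hcon
  obtain ⟨a, b, hab⟩ := hnc
  have hinv' (j : n) : ∑ i, -f i * A i j = -f j := by
    simp only [neg_mul, sum_neg_distrib, hinv]
  refine hab (neg_inj.1 (apply_eq_apply_of_isMax_backward_closed (f := (-f ·)) hA hirr
    (fun i j hij hmax => ?_) a b))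
  have hmin (l : n) : f j ≤ f l := neg_le_neg_iff.1 (hmax l)
  have hcol : 1 ≤ ∑ l, A l j := le_of_not_gt fun h =>
    (hcon j h).elim fun l hl => (hmin l).not_gt hl
  refine apply_eq_of_isMax_of_pos hA hinv' hmax ?_ hij
  rw [neg_mul, neg_le_neg_iff]
  exact le_mul_of_one_le_right (hf j) hcol

end Matrix

theorem exists_ne_of_ne_uniform {n R : Type*} [Fintype n] [Nonempty n] [Field R] [CharZero R]
    {f : n → R} (h1 : ∑ i, f i = 1) (hne : f ≠ fun _ => (1 : R) / Fintype.card n) :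
    ∃ i j, f i ≠ f j := by
  by_contra! hconst
  refine hne (funext fun i => ?_)
  rw [← h1, sum_congr rfl fun j _ => hconst j i, sum_const, card_univ, nsmul_eq_mul,
    mul_div_cancel_left₀ _ (Nat.cast_ne_zero.2 Fintype.card_ne_zero)]

theorem stmt10_general {V : Type*} [Fintype V] [DecidableEq V] [Nonempty V]
    (tK : Matrix V V ℝ)
    (htK0 : ∀ x y, 0 ≤ tK x y)
    (hirr : ∀ x y : V, ∃ n : ℕ, 0 < (tK ^ n) x y)
    (π : V → ℝ) (hπ0 : ∀ x, 0 ≤ π x) (hπ1 : ∑ x, π x = 1)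
    (hinv : ∀ y, ∑ x, π x * tK x y = π y)
    (hne : π ≠ fun _ => (1 : ℝ) / Fintype.card V) :
    (∃ xp : V, (1 : ℝ) < ∑ y, tK y xp ∧ ∀ z, π z ≤ π xp) ∧
      (∃ xm : V, (∑ y, tK y xm) < 1 ∧ ∀ z, π xm ≤ π z) := by
  have hnc := exists_ne_of_ne_uniform hπ1 hne
  exact ⟨Matrix.exists_one_lt_sum_apply_of_isMax htK0 hirr hinv hπ0 hnc,
    Matrix.exists_sum_apply_lt_one_of_isMin htK0 hirr hinv hπ0 hnc⟩

/-- Lemma 4.4: if π̃ ≠ u and K̃ is irreducible, then the max of π̃ is attained at a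
point with column sum > 1 and the min at a point with column sum < 1. -/
theorem stmt10 {V : Type*} [Fintype V] [DecidableEq V] [Nonempty V]
    (tK : Matrix V V ℝ)
    (htK0 : ∀ x y, 0 ≤ tK x y) (htK1 : ∀ x, ∑ y, tK x y = 1)
    (hirr : ∀ x y : V, ∃ n : ℕ, 0 < (tK ^ n) x y)
    (π : V → ℝ) (hπ0 : ∀ x, 0 ≤ π x) (hπ1 : ∑ x, π x = 1)
    (hinv : ∀ y, ∑ x, π x * tK x y = π y)
    (hne : π ≠ fun _ => (1 : ℝ) / Fintype.card V) :
    (∃ xp : V, (1 : ℝ) < ∑ y, tK y xp ∧ ∀ z, π z ≤ π xp) ∧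
      (∃ xm : V, (∑ y, tK y xm) < 1 ∧ ∀ z, π xm ≤ π z) :=
  stmt10_general tK htK0 hirr π hπ0 hπ1 hinv hne
end
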